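/- Let X be a real random variable with E[exp(θX)] finite for all θ and X not almost surely constant. For any fixed t ≠ 0, the function α ↦ α·Λ(t/α), where Λ(θ) = log E[exp(θX)], is strictly convex on (0, ∞), since its second derivative equals (t²/α³) times the variance of X under the exponentially tilted measure, which is strictly positive. -/

import Mathlib

/-!
Λ''(θ) is the variance of `X` under the tilted measure `μ.tilted (θ * X ·)`, which has the same
null sets as `μ`; since `X` is not a.s. constant this variance is positive, so Λ is strictly convex.
The perspective α ↦ α Λ(t/α) of a strictly convex function is strictly convex on `(0, ∞)`: with
`c = p a + q b`, the point `t / c` is the convex combination of the distinct points `t / a` and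
`t / b` with weights `p a / c` and `q b / c`, and multiplying the strict inequality by `c` gives
the claim.
-/

open MeasureTheory Real Set

lemma StrictConvexOn.perspective {f : ℝ → ℝ} (hf : StrictConvexOn ℝ univ f) {t : ℝ}
    (ht : t ≠ 0) : StrictConvexOn ℝ (Ioi 0) (fun α => α * f (t / α)) := by
  refine ⟨convex_Ioi 0, fun a (ha : 0 < a) b (hb : 0 < b) hab p q hp hq hpq => ?_⟩
  set c := p * a + q * b
  have hc : 0 < c := by positivity
  have hweights : p * a / c + q * b / c = 1 := by rw [← add_div, div_self hc.ne']
  have hcomb : (p * a / c) * (t / a) + (q * b / c) * (t / b) = t / c := by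
    field_simp
    linear_combination hpq
  have hne : t / a ≠ t / b := fun h => hab <| by
    rwa [div_eq_div_iff ha.ne' hb.ne', mul_right_inj' ht, eq_comm] at h
  have key := hf.2 (mem_univ _) (mem_univ _) hne (by positivity) (by positivity) hweights
  simp only [smul_eq_mul, hcomb] at key ⊢
  calc c * f (t / c)
      < c * (p * a / c * f (t / a) + q * b / c * f (t / b)) := mul_lt_mul_of_pos_left key hc
    _ = p * (a * f (t / a)) + q * (b * f (t / b)) := by field_simp

namespace ProbabilityTheory

variable {Ω : Type*} {mΩ : MeasurableSpace Ω} {μ : Measure Ω} {X : Ω → ℝ} {t : ℝ}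

lemma variance_tilted_mul_pos (ht : t ∈ interior (integrableExpSet X μ))
    (hX : ¬ ∃ c, ∀ᵐ ω ∂μ, X ω = c) : 0 < Var[X; μ.tilted (t * X ·)] := by
  have : NeZero μ := ⟨fun hμ => hX ⟨0, by simp [hμ]⟩⟩
  have ht' := interior_subset (s := integrableExpSet X μ) ht
  have : IsProbabilityMeasure (μ.tilted (t * X ·)) := isProbabilityMeasure_tilted ht'
  refine (variance_nonneg _ _).lt_of_ne' fun h0 => hX ⟨(μ.tilted (t * X ·))[X], ?_⟩
  exact (absolutelyContinuous_tilted ht').ae_le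
    (ae_eq_integral_of_variance_eq_zero (memLp_tilted_mul ht 2) h0)

lemma strictConvexOn_cgf (hint : ∀ t, Integrable (fun ω => exp (t * X ω)) μ)
    (hX : ¬ ∃ c, ∀ᵐ ω ∂μ, X ω = c) : StrictConvexOn ℝ univ (cgf X μ) := by
  have hinterior : interior (integrableExpSet X μ) = univ := by
    rw [show integrableExpSet X μ = univ from eq_univ_of_forall hint, interior_univ]
  refine strictConvexOn_univ_of_deriv2_pos ?_ fun θ => ?_
  · rw [← continuousOn_univ, ← hinterior]
    exact analyticOnNhd_cgf.continuousOn
  · rw [← iteratedDeriv_eq_iterate, ← variance_tilted_mul (hinterior ▸ mem_univ θ)]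
    exact variance_tilted_mul_pos (hinterior ▸ mem_univ θ) hX

end ProbabilityTheory

theorem stmt_6_general {Ω : Type*} [MeasurableSpace Ω] (μ : Measure Ω)
    (X : Ω → ℝ)
    (hint : ∀ θ : ℝ, Integrable (fun ω => Real.exp (θ * X ω)) μ)
    (hnd : ¬ ∃ c : ℝ, ∀ᵐ ω ∂μ, X ω = c)
    (t : ℝ) (ht : t ≠ 0) :
    StrictConvexOn ℝ (Set.Ioi (0 : ℝ))
      (fun α : ℝ => α * Real.log (∫ ω, Real.exp ((t / α) * X ω) ∂μ)) :=
  (ProbabilityTheory.strictConvexOn_cgf hint hnd).perspective ht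

/-- For a non-degenerate random variable `X` with everywhere-finite MGF and fixed `t ≠ 0`,
the function α ↦ α Λ(t/α) (Λ the cumulant generating function) is strictly convex on (0, ∞). -/
theorem stmt_6 {Ω : Type*} [MeasurableSpace Ω] (μ : Measure Ω) [IsProbabilityMeasure μ]
    (X : Ω → ℝ) (hX : Measurable X)
    (hint : ∀ θ : ℝ, Integrable (fun ω => Real.exp (θ * X ω)) μ)
    (hnd : ¬ ∃ c : ℝ, ∀ᵐ ω ∂μ, X ω = c)
    (t : ℝ) (ht : t ≠ 0) :
    StrictConvexOn ℝ (Set.Ioi (0 : ℝ))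
      (fun α : ℝ => α * Real.log (∫ ω, Real.exp ((t / α) * X ω) ∂μ)) :=
  stmt_6_general μ X hint hnd t ht
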